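/- arXiv:0812.1729 — 2 statements merged into one kernel-verified Lean document; each statement's English description precedes it below -/
import Mathlib

section
/- Let A be a normalized deterministic parity tree automaton over a finite nonempty alphabet Σ and let q be a state of A. Then there exist a tree t ∈ T_Σ and an accepting run of A on t in which q occurs at infinitely many pairwise incomparable nodes (nodes v, w ∈ {0,1}* such that neither is a prefix of the other) if and only if q is productive and there is an accepting loop in A that replicates q. -/
open Filter

/-- A deterministic parity tree automaton over alphabet `Alpha` with state set `Q`. -/
structure DPTA (Alpha : Type) (Q : Type) where
  init : Q
  delta : Q → Alpha → Q × Q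
  rank : Q → ℕ

namespace DPTA

variable {Alpha Q : Type}

/-- The state reached in one step from `q` reading letter `s` in direction `d`. -/
def next (M : DPTA Alpha Q) (q : Q) (s : Alpha) (d : Bool) : Q :=
  if d then (M.delta q s).2 else (M.delta q s).1

/-- The state of the run started in `q` on the tree `t` at the node `v`
(nodes are words over `{0,1}`, head = first direction from the root). -/
def runFrom (M : DPTA Alpha Q) : Q → (List Bool → Alpha) → List Bool → Q
  | q, _, [] => q
  | q, t, d :: v => runFrom M (M.next q (t []) d) (fun u => t (d :: u)) v

/-- The state of the (unique) run of `M` on `t` at node `v`. -/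
def run (M : DPTA Alpha Q) (t : List Bool → Alpha) (v : List Bool) : Q :=
  runFrom M M.init t v

/-- Parity acceptance: the largest value occurring infinitely often is even. -/
def ParityAccept (f : ℕ → ℕ) : Prop :=
  Even (sSup {r : ℕ | ∃ᶠ n in atTop, f n = r})

/-- The prefix of length `n` of an infinite path. -/
def pref (π : ℕ → Bool) (n : ℕ) : List Bool :=
  List.ofFn fun i : Fin n => π i

/-- The run of `M` on `t` started at state `q` is accepting. -/
def AcceptsFrom (M : DPTA Alpha Q) (q : Q) (t : List Bool → Alpha) : Prop :=
  ∀ π : ℕ → Bool, ParityAccept fun n => M.rank (runFrom M q t (pref π n))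

/-- The language recognised by `M`: trees with accepting run. -/
def Lang (M : DPTA Alpha Q) : Set (List Bool → Alpha) :=
  {t | M.AcceptsFrom M.init t}

/-- The state reached from `q` following a finite sequence of steps
(steps = letter together with direction). -/
def follow (M : DPTA Alpha Q) (q : Q) (steps : List (Alpha × Bool)) : Q :=
  steps.foldl (fun p s => M.next p s.1 s.2) q

/-- All states visited along a path (the starting state included). -/
def statesOn (M : DPTA Alpha Q) (q : Q) (steps : List (Alpha × Bool)) : List Q :=
  List.scanl (fun p s => M.next p s.1 s.2) q steps

/-- The largest rank of a state visited along a path. -/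
def maxRankOn (M : DPTA Alpha Q) (q : Q) (steps : List (Alpha × Bool)) : ℕ :=
  ((M.statesOn q steps).map M.rank).foldr max 0

/-- `steps` forms a loop at `q` (a path of positive length from `q` to `q`). -/
def IsLoop (M : DPTA Alpha Q) (q : Q) (steps : List (Alpha × Bool)) : Prop :=
  steps ≠ [] ∧ M.follow q steps = q

/-- `M` contains an `(i,k)`-flower: loops `lam i, …, lam k` at a common state `q`,
the largest rank on `lam j` has the parity of `j` and increases strictly with `j`. -/
def HasFlower (M : DPTA Alpha Q) (i k : ℕ) : Prop :=
  ∃ (q : Q) (lam : ℕ → List (Alpha × Bool)),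
    (∀ j, i ≤ j → j ≤ k → M.IsLoop q (lam j) ∧ M.maxRankOn q (lam j) % 2 = j % 2) ∧
    (∀ j, i ≤ j → j < k → M.maxRankOn q (lam j) < M.maxRankOn q (lam (j + 1)))

/-- `q` is reachable from the initial state. -/
def Reachable (M : DPTA Alpha Q) (q : Q) : Prop :=
  ∃ steps, M.follow M.init steps = q

/-- `q` is productive: it occurs in some accepting run of `M`. -/
def Productive (M : DPTA Alpha Q) (q : Q) : Prop :=
  ∃ t ∈ M.Lang, ∃ v, M.run t v = q

/-- The transition from `q` reading `s` is used in some accepting run of `M`. -/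
def ProductiveTrans (M : DPTA Alpha Q) (q : Q) (s : Alpha) : Prop :=
  ∃ t ∈ M.Lang, ∃ v, M.run t v = q ∧ t v = s

/-- `q` is all-rejecting: started from `q`, the automaton accepts no tree. -/
def AllRejecting (M : DPTA Alpha Q) (q : Q) : Prop :=
  ∀ t, ¬ M.AcceptsFrom q t

/-- `M` is normalized: every state is reachable, every state is productive except
possibly one all-rejecting state `⊥` with `δ(⊥,σ) = (⊥,⊥)`, and every transition is
productive or of the form `δ(q,σ) = (⊥,⊥)`. -/
def Normalized (M : DPTA Alpha Q) : Prop :=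
  (∀ q, M.Reachable q) ∧
  ∃ bot : Option Q,
    (∀ q, some q ≠ bot → M.Productive q) ∧
    (∀ q, some q = bot → M.AllRejecting q ∧ ∀ s, M.delta q s = (q, q)) ∧
    (∀ q s, M.ProductiveTrans q s ∨
      (some (M.delta q s).1 = bot ∧ some (M.delta q s).2 = bot))

end DPTA


/-- The state `p` is replicated by an accepting loop: there is an accepting loop whose
first step reads a letter `s` in direction `d`, and a path to `p` starting with the
same letter `s` read in the opposite direction `!d`. -/
def ReplicatedByAccLoop {Alpha Q : Type} (M : DPTA Alpha Q) (p : Q) : Prop :=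
  ∃ (q1 : Q) (s : Alpha) (d : Bool) (l : List (Alpha × Bool)),
    M.IsLoop q1 ((s, d) :: l) ∧ Even (M.maxRankOn q1 ((s, d) :: l)) ∧
    ∃ rest : List (Alpha × Bool), M.follow q1 ((s, !d) :: rest) = p

/-!
Forward direction: an infinite antichain of `q`-nodes in an accepting run forces, by König's
lemma, an infinite path `π` from which infinitely many of these nodes branch off, and by
pigeonhole a single state `q₁` at infinitely many of the branch points. Let `R` be the largest rank
seen infinitely often on `π` (even, since the run accepts) and choose two such branch points beyond
the last rank above `R`, with an occurrence of `R` between them. The segment of `π` between them is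
an accepting loop at `q₁`, and the branch towards a `q`-node at the first one replicates `q`.

Backward direction: pump the loop forever along a spine and hang, opposite to the first step of
every iteration, a tree that follows the replication path to `q` and continues with an accepting
subtree at `q`; then graft the spine below a path from the initial state to the loop state. The
ranks on the spine are periodic with maximum the even rank of the loop.
Normalization supplies accepting trees for all the other off-spine children: if one child of a
transition admits an accepting tree, the transition is not the one into `⊥`, hence productive, so
the other child admits one too.
-/

theorem List.not_isPrefix_of_append_singleton {α : Type*} {x v w : List α} {a b : α}
    (hab : a ≠ b) (hv : x ++ [a] <+: v) (hw : x ++ [b] <+: w) : ¬ v <+: w := by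
  intro hvw
  have h := (List.prefix_of_prefix_length_le (hv.trans hvw) hw (by simp)).eq_of_length (by simp)
  exact hab (by simpa using h)

theorem Function.Periodic.setOf_frequently_eq_range {α : Type*} {f : ℕ → α} {c : ℕ}
    (hf : Function.Periodic f c) (hc : 0 < c) :
    {r | ∃ᶠ n in atTop, f n = r} = Set.range f := by
  refine Set.Subset.antisymm (fun r hr => hr.exists) ?_
  rintro _ ⟨n, rfl⟩
  exact frequently_atTop.2 fun a => ⟨n + a * c, by nlinarith, hf.nat_mul a n⟩

theorem frequently_eq_sSup_and_eventually_le {f : ℕ → ℕ} (hf : (Set.range f).Finite) :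
    (∃ᶠ n in atTop, f n = sSup {r | ∃ᶠ n in atTop, f n = r}) ∧
      ∀ᶠ n in atTop, f n ≤ sSup {r | ∃ᶠ n in atTop, f n = r} := by
  set A := {r | ∃ᶠ n in atTop, f n = r}
  have hbdd : BddAbove A := (hf.subset fun r hr => hr.exists).bddAbove
  have hev : ∀ᶠ n in atTop, f n ∈ A := by
    have : ∀ᶠ n in atTop, ∀ r ∈ Set.range f, f n = r → r ∈ A :=
      (eventually_all_finite hf).2 fun r _ => by
        by_cases hr : r ∈ A
        · exact Eventually.of_forall fun _ _ => hr
        · exact (not_frequently.1 hr).mono fun _ h h' => absurd h' h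
    exact this.mono fun n h => h _ ⟨n, rfl⟩ rfl
  obtain ⟨n, hn⟩ := hev.exists
  exact ⟨Nat.sSup_mem ⟨_, hn⟩ hbdd, hev.mono fun n h => le_csSup hbdd h⟩

namespace DPTA

variable {Alpha Q : Type}

theorem pref_succ (π : ℕ → Bool) (n : ℕ) :
    pref π (n + 1) = π 0 :: pref (fun k => π (k + 1)) n :=
  List.ofFn_succ

theorem pref_concat (π : ℕ → Bool) (n : ℕ) : pref π (n + 1) = pref π n ++ [π n] :=
  List.ofFn_succ_last

theorem pref_isPrefix_pref (π : ℕ → Bool) {m n : ℕ} (h : m ≤ n) : pref π m <+: pref π n := by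
  induction n, h using Nat.le_induction with
  | base => exact List.prefix_refl _
  | succ n _ ih => exact ih.trans (pref_concat π n ▸ List.prefix_append _ _)

theorem not_isPrefix_pref_append_not (π : ℕ → Bool) {m n : ℕ} (hmn : m ≠ n)
    (v w : List Bool) : ¬ pref π m ++ (!π m) :: v <+: pref π n ++ (!π n) :: w := by
  have branch : ∀ {a b} (u : List Bool), a < b → pref π a ++ [π a] <+: pref π b ++ (!π b) :: u :=
    fun _ h => (pref_concat π _ ▸ pref_isPrefix_pref π h).trans (List.prefix_append _ _)
  rcases hmn.lt_or_gt with h | h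
  · exact List.not_isPrefix_of_append_singleton (a := !π m) (by simp) ⟨v, by simp⟩ (branch w h)
  · exact List.not_isPrefix_of_append_singleton (b := !π n) (by simp) (branch v h) ⟨w, by simp⟩

theorem exists_forall_pref {P : List Bool → Prop} (h₀ : P [])
    (hstep : ∀ u, P u → ∃ e, P (u ++ [e])) : ∃ π : ℕ → Bool, ∀ n, P (pref π n) := by
  choose c hc using fun u : {u // P u} => hstep u.1 u.2
  let g : ℕ → {u // P u} := fun n => Nat.rec ⟨[], h₀⟩ (fun _ u => ⟨u.1 ++ [c u], hc u⟩) n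
  refine ⟨fun n => c (g n), fun n => ?_⟩
  suffices h : pref (fun n => c (g n)) n = (g n).1 from h ▸ (g n).2
  induction n with
  | zero => rfl
  | succ n ih => rw [pref_concat, ih]

theorem exists_infinite_setOf_isPrefix_concat {S : Set (List Bool)} {u : List Bool}
    (hu : {v ∈ S | u <+: v}.Infinite) : ∃ e, {v ∈ S | u ++ [e] <+: v}.Infinite := by
  by_contra! h
  refine hu (((Set.finite_singleton u).union (Set.finite_iUnion h)).subset ?_)
  rintro _ ⟨hv, w, rfl⟩
  rcases w with _ | ⟨e, w⟩
  · simp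
  · exact Or.inr (Set.mem_iUnion.2 ⟨e, hv, w, by simp⟩)

theorem exists_isPrefix_pref_append_not {π : ℕ → Bool} {N : ℕ} {v : List Bool}
    (hN : pref π N <+: v) (hv : v ≠ pref π v.length) : ∃ m ≥ N, pref π m ++ [!π m] <+: v := by
  obtain ⟨k, hk⟩ : ∃ k, v.length = N + k := ⟨v.length - N, by
    have := hN.length_le
    simp only [pref, List.length_ofFn] at this
    omega⟩
  induction k generalizing N with
  | zero => exact absurd (hN.eq_of_length (by simp [pref, hk])).symm (by simpa [hk] using hv)
  | succ k ih =>
    obtain ⟨_ | ⟨e, w⟩, rfl⟩ := hN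
    · simp [pref] at hk
    by_cases he : e = π N
    · obtain ⟨m, hm, hmv⟩ := ih (N := N + 1) ⟨w, by simp [pref_concat, he]⟩
        (by simp only [List.length_append, List.length_cons] at hk ⊢; omega)
      exact ⟨m, by omega, hmv⟩
    · exact ⟨N, le_rfl, w, by simp [Bool.eq_not.2 he]⟩

theorem exists_path_frequently_branch {S : Set (List Bool)} (hS : S.Infinite)
    (hanti : IsAntichain (· <+: ·) S) :
    ∃ π : ℕ → Bool, ∃ᶠ m in atTop, ∃ v ∈ S, pref π m ++ [!π m] <+: v := by
  obtain ⟨π, hπ⟩ := exists_forall_pref (P := fun u => {v ∈ S | u <+: v}.Infinite)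
    (by simpa using hS) fun u hu => exists_infinite_setOf_isPrefix_concat hu
  have hnotS : ∀ n, pref π n ∉ S := fun n hn => hπ n <| (Set.finite_singleton _).subset
    fun v ⟨hv, hnv⟩ => by_contra fun hne => hanti hn hv (Ne.symm hne) hnv
  refine ⟨π, frequently_atTop.2 fun N => ?_⟩
  obtain ⟨v, hv, hNv⟩ := (hπ N).nonempty
  obtain ⟨m, hm, hmv⟩ := exists_isPrefix_pref_append_not hNv fun h => hnotS _ (h ▸ hv)
  exact ⟨m, hm, v, hv, hmv⟩

def subtree (t : List Bool → Alpha) (u : List Bool) : List Bool → Alpha := fun w => t (u ++ w)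

theorem follow_append (M : DPTA Alpha Q) (p : Q) (st st' : List (Alpha × Bool)) :
    M.follow p (st ++ st') = M.follow (M.follow p st) st' :=
  List.foldl_append

theorem runFrom_append (M : DPTA Alpha Q) (p : Q) (t : List Bool → Alpha) (u v : List Bool) :
    M.runFrom p t (u ++ v) = M.runFrom (M.runFrom p t u) (subtree t u) v := by
  induction u generalizing p t with
  | nil => rfl
  | cons d u ih => exact ih _ _

theorem runFrom_concat (M : DPTA Alpha Q) (p : Q) (t : List Bool → Alpha) (u : List Bool)
    (e : Bool) : M.runFrom p t (u ++ [e]) = M.next (M.runFrom p t u) (t u) e := by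
  rw [runFrom_append]
  simp [runFrom, subtree]

theorem exists_follow_eq_runFrom (M : DPTA Alpha Q) (p : Q) (t : List Bool → Alpha)
    (v : List Bool) : ∃ st, M.follow p st = M.runFrom p t v := by
  induction v generalizing p t with
  | nil => exact ⟨[], rfl⟩
  | cons d v ih =>
    obtain ⟨st, h⟩ := ih (M.next p (t []) d) fun u => t (d :: u)
    exact ⟨(t [], d) :: st, h⟩

theorem follow_map_range' (M : DPTA Alpha Q) (p : Q) (t : List Bool → Alpha) (π : ℕ → Bool)
    (a k : ℕ) :
    M.follow (M.runFrom p t (pref π a)) ((List.range' a k).map fun n => (t (pref π n), π n)) =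
      M.runFrom p t (pref π (a + k)) := by
  induction k with
  | zero => rfl
  | succ k ih =>
    rw [List.range'_concat, List.map_append, follow_append, ih, ← add_assoc, pref_concat,
      runFrom_concat, one_mul]
    rfl

theorem getElem_statesOn (M : DPTA Alpha Q) (q : Q) (st : List (Alpha × Bool)) {k : ℕ}
    (hk : k < (M.statesOn q st).length) : (M.statesOn q st)[k] = M.follow q (st.take k) :=
  List.getElem_scanl hk

theorem rank_follow_take_le_maxRankOn (M : DPTA Alpha Q) (q : Q) (st : List (Alpha × Bool))
    {k : ℕ} (hk : k ≤ st.length) : M.rank (M.follow q (st.take k)) ≤ M.maxRankOn q st := by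
  have hk' : k < (M.statesOn q st).length := by rw [statesOn, List.length_scanl]; omega
  rw [← getElem_statesOn M q st hk']
  exact List.le_max_of_le (List.mem_map_of_mem (List.getElem_mem hk')) le_rfl

theorem exists_rank_follow_take_eq_maxRankOn (M : DPTA Alpha Q) (q : Q)
    (st : List (Alpha × Bool)) :
    ∃ k ≤ st.length, M.rank (M.follow q (st.take k)) = M.maxRankOn q st := by
  have hne : (M.statesOn q st).map M.rank ≠ [] := by simp [statesOn]
  obtain ⟨p, hp, hrank⟩ := List.mem_map.1 (List.maximum_mem (List.foldr_max_of_ne_nil hne).symm)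
  obtain ⟨k, hk, rfl⟩ := List.mem_iff_getElem.1 hp
  refine ⟨k, by simpa [statesOn, Nat.lt_succ_iff] using hk, ?_⟩
  rw [← getElem_statesOn M q st hk]
  exact hrank

theorem maxRankOn_map_range' (M : DPTA Alpha Q) (p : Q) (t : List Bool → Alpha)
    (π : ℕ → Bool) {a k R n₀ : ℕ}
    (hle : ∀ n, a ≤ n → n ≤ a + k → M.rank (M.runFrom p t (pref π n)) ≤ R)
    (hn₀ : a ≤ n₀ ∧ n₀ ≤ a + k) (hR : M.rank (M.runFrom p t (pref π n₀)) = R) :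
    M.maxRankOn (M.runFrom p t (pref π a)) ((List.range' a k).map fun n => (t (pref π n), π n)) =
      R := by
  have hstate : ∀ j ≤ k, M.follow (M.runFrom p t (pref π a))
      (((List.range' a k).map fun n => (t (pref π n), π n)).take j) =
        M.runFrom p t (pref π (a + j)) := fun j hj => by
    rw [← List.map_take, List.take_range'_of_length_ge hj, follow_map_range']
  obtain ⟨j, hj, hmax⟩ := exists_rank_follow_take_eq_maxRankOn M (M.runFrom p t (pref π a))
    ((List.range' a k).map fun n => (t (pref π n), π n))
  rw [List.length_map, List.length_range'] at hj
  rw [← hmax, hstate j hj]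
  refine le_antisymm (hle _ (by omega) (by omega)) ?_
  have := rank_follow_take_le_maxRankOn M (M.runFrom p t (pref π a))
    ((List.range' a k).map fun n => (t (pref π n), π n)) (k := n₀ - a)
    (by simp only [List.length_map, List.length_range']; omega)
  rwa [hstate _ (by omega), Nat.add_sub_cancel' hn₀.1, hR, ← hmax, hstate j hj] at this

def AcceptsAlong (M : DPTA Alpha Q) (p : Q) (t : List Bool → Alpha) (π : ℕ → Bool) : Prop :=
  ParityAccept fun n => M.rank (M.runFrom p t (pref π n))

theorem parityAccept_comp_succ (f : ℕ → ℕ) :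
    ParityAccept (fun n => f (n + 1)) ↔ ParityAccept f := by
  have : ∀ r, (∃ᶠ n in atTop, f (n + 1) = r) ↔ ∃ᶠ n in atTop, f n = r := fun r => by
    rw [← frequently_map (m := fun n => n + 1) (P := fun n => f n = r), map_add_atTop_eq_nat]
  simp only [ParityAccept, this]

theorem acceptsAlong_iff_tail (M : DPTA Alpha Q) (p : Q) (t : List Bool → Alpha)
    (π : ℕ → Bool) :
    M.AcceptsAlong p t π ↔
      M.AcceptsAlong (M.next p (t []) (π 0)) (fun v => t (π 0 :: v)) fun n => π (n + 1) := by
  rw [AcceptsAlong, ← parityAccept_comp_succ]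
  simp only [pref_succ]
  rfl

theorem acceptsFrom_iff_children (M : DPTA Alpha Q) (p : Q) (t : List Bool → Alpha) :
    M.AcceptsFrom p t ↔ ∀ e, M.AcceptsFrom (M.next p (t []) e) fun v => t (e :: v) := by
  refine ⟨fun h e π => ?_, fun h π => (acceptsAlong_iff_tail M p t π).2 (h _ _)⟩
  exact (acceptsAlong_iff_tail M p t fun n => Nat.casesOn n e π).1 (h _)

theorem acceptsFrom_subtree {M : DPTA Alpha Q} {p : Q} {t : List Bool → Alpha}
    (h : M.AcceptsFrom p t) (u : List Bool) : M.AcceptsFrom (M.runFrom p t u) (subtree t u) := by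
  induction u generalizing p t with
  | nil => exact h
  | cons d u ih => exact ih ((acceptsFrom_iff_children M p t).1 h d)

def node (a : Alpha) (e : Bool) (tOn tOff : List Bool → Alpha) : List Bool → Alpha
  | [] => a
  | x :: v => if x = e then tOn v else tOff v

theorem acceptsFrom_node {M : DPTA Alpha Q} {p : Q} {a : Alpha} {e : Bool}
    {tOn tOff : List Bool → Alpha} (hOn : M.AcceptsFrom (M.next p a e) tOn)
    (hOff : M.AcceptsFrom (M.next p a (!e)) tOff) : M.AcceptsFrom p (node a e tOn tOff) := by
  refine (acceptsFrom_iff_children M p _).2 fun x => ?_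
  by_cases hx : x = e
  · subst hx
    simpa [node] using hOn
  · obtain rfl := Bool.eq_not.2 hx
    simpa [node] using hOff

def spine (step : ℕ → Alpha × Bool) (sib : ℕ → List Bool → Alpha) : List Bool → Alpha
  | [] => (step 0).1
  | x :: v =>
    if x = (step 0).2 then spine (fun i => step (i + 1)) (fun i => sib (i + 1)) v else sib 0 v

theorem spine_nil (step : ℕ → Alpha × Bool) (sib : ℕ → List Bool → Alpha) :
    spine step sib [] = (step 0).1 :=
  rfl

theorem spine_child_self (step : ℕ → Alpha × Bool) (sib : ℕ → List Bool → Alpha) :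
    (fun v => spine step sib ((step 0).2 :: v)) =
      spine (fun i => step (i + 1)) (fun i => sib (i + 1)) :=
  funext fun _ => if_pos rfl

theorem spine_child_not (step : ℕ → Alpha × Bool) (sib : ℕ → List Bool → Alpha) :
    (fun v => spine step sib ((!(step 0).2) :: v)) = sib 0 :=
  funext fun _ => if_neg (by simp)

section Spine

variable {M : DPTA Alpha Q} {step : ℕ → Alpha × Bool} {sib : ℕ → List Bool → Alpha}
  {gs : ℕ → Q}

theorem runFrom_spine_pref (hgs : ∀ n, gs (n + 1) = M.next (gs n) (step n).1 (step n).2)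
    (n : ℕ) : M.runFrom (gs 0) (spine step sib) (pref (fun i => (step i).2) n) = gs n := by
  induction n generalizing gs step sib with
  | zero => rfl
  | succ n ih =>
    rw [pref_succ, runFrom, spine_nil, spine_child_self, ← hgs 0]
    exact ih (gs := fun i => gs (i + 1)) fun i => hgs (i + 1)

theorem runFrom_spine_branch (hgs : ∀ n, gs (n + 1) = M.next (gs n) (step n).1 (step n).2)
    (m : ℕ) (w : List Bool) :
    M.runFrom (gs 0) (spine step sib) (pref (fun i => (step i).2) m ++ (!(step m).2) :: w) =
      M.runFrom (M.next (gs m) (step m).1 (!(step m).2)) (sib m) w := by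
  induction m generalizing gs step sib with
  | zero => rw [pref, List.ofFn_zero, List.nil_append, runFrom, spine_child_not]; rfl
  | succ m ih =>
    rw [pref_succ, List.cons_append, runFrom, spine_nil, spine_child_self, ← hgs 0]
    exact ih (gs := fun i => gs (i + 1)) fun i => hgs (i + 1)

theorem acceptsAlong_spine_of_branch
    (hgs : ∀ n, gs (n + 1) = M.next (gs n) (step n).1 (step n).2)
    (hsib : ∀ n, M.AcceptsFrom (M.next (gs n) (step n).1 (!(step n).2)) (sib n))
    {π : ℕ → Bool} {m : ℕ} (hon : ∀ j < m, π j = (step j).2) (hoff : π m ≠ (step m).2) :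
    M.AcceptsAlong (gs 0) (spine step sib) π := by
  induction m generalizing gs step sib π with
  | zero =>
    rw [acceptsAlong_iff_tail, Bool.eq_not.2 hoff, spine_nil, spine_child_not]
    exact hsib 0 _
  | succ m ih =>
    rw [acceptsAlong_iff_tail, hon 0 m.succ_pos, spine_nil, spine_child_self, ← hgs 0]
    exact ih (fun n => hgs (n + 1)) (fun n => hsib (n + 1))
      (fun j hj => hon (j + 1) (by omega)) hoff

theorem acceptsFrom_spine (hgs : ∀ n, gs (n + 1) = M.next (gs n) (step n).1 (step n).2)
    (hsib : ∀ n, M.AcceptsFrom (M.next (gs n) (step n).1 (!(step n).2)) (sib n))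
    (hgs_acc : ParityAccept fun n => M.rank (gs n)) : M.AcceptsFrom (gs 0) (spine step sib) := by
  intro π
  by_cases hbranch : ∃ m, π m ≠ (step m).2
  · exact acceptsAlong_spine_of_branch hgs hsib
      (fun j hj => not_not.1 (Nat.find_min hbranch hj)) (Nat.find_spec hbranch)
  · obtain rfl : π = fun i => (step i).2 := funext fun m => not_not.1 (not_exists.1 hbranch m)
    simpa only [runFrom_spine_pref hgs] using hgs_acc

end Spine

variable {M : DPTA Alpha Q}

theorem follow_take_mod_of_le {q : Q} {L : List (Alpha × Bool)} (hL : M.follow q L = q) {k : ℕ}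
    (hk : k ≤ L.length) : M.follow q (L.take (k % L.length)) = M.follow q (L.take k) := by
  rcases hk.lt_or_eq with hk | rfl
  · rw [Nat.mod_eq_of_lt hk]
  · rw [Nat.mod_self, List.take_zero, List.take_length, hL]
    rfl

theorem follow_take_mod_succ {q : Q} {L : List (Alpha × Bool)} (hL : M.follow q L = q)
    (hpos : 0 < L.length) (n : ℕ) :
    M.follow q (L.take ((n + 1) % L.length)) =
      M.next (M.follow q (L.take (n % L.length))) (L[n % L.length]'(Nat.mod_lt n hpos)).1
        (L[n % L.length]'(Nat.mod_lt n hpos)).2 := by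
  rw [← Nat.mod_add_mod, follow_take_mod_of_le hL (Nat.mod_lt n hpos), List.take_add_one,
    List.getElem?_eq_getElem (Nat.mod_lt n hpos), Option.toList_some, follow_append]
  rfl

theorem parityAccept_rank_follow_take_mod_iff {q : Q} {L : List (Alpha × Bool)}
    (hL : M.follow q L = q) (hpos : 0 < L.length) :
    ParityAccept (fun n => M.rank (M.follow q (L.take (n % L.length)))) ↔
      Even (M.maxRankOn q L) := by
  have hperiodic : Function.Periodic (fun n => M.rank (M.follow q (L.take (n % L.length))))
      L.length := fun n => by simp
  rw [ParityAccept, hperiodic.setOf_frequently_eq_range hpos]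
  suffices h : sSup (Set.range fun n => M.rank (M.follow q (L.take (n % L.length)))) =
      M.maxRankOn q L by rw [h]
  have hle : ∀ n, M.rank (M.follow q (L.take (n % L.length))) ≤ M.maxRankOn q L := fun n =>
    rank_follow_take_le_maxRankOn M q L (Nat.mod_lt n hpos).le
  obtain ⟨k, hk, hmax⟩ := exists_rank_follow_take_eq_maxRankOn M q L
  refine le_antisymm (csSup_le (Set.range_nonempty _) (Set.forall_mem_range.2 hle)) ?_
  exact le_csSup ⟨_, Set.forall_mem_range.2 hle⟩
    ⟨k, by simp only [follow_take_mod_of_le hL hk, hmax]⟩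

theorem Normalized.exists_acceptsFrom_next_not (hM : M.Normalized) {p : Q} {a : Alpha}
    {e : Bool} (h : ∃ t, M.AcceptsFrom (M.next p a e) t) :
    ∃ t, M.AcceptsFrom (M.next p a (!e)) t := by
  obtain ⟨-, bot, -, hbot, htrans⟩ := hM
  rcases htrans p a with ⟨t, ht, v, hv, hlabel⟩ | ⟨hbot₁, hbot₂⟩
  · refine ⟨subtree t (v ++ [!e]), ?_⟩
    have := acceptsFrom_subtree ht (v ++ [!e])
    rwa [runFrom_concat, hlabel, ← run, hv] at this
  · obtain ⟨t, ht⟩ := h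
    have hnext : some (M.next p a e) = bot := by cases e <;> assumption
    exact absurd ht ((hbot _ hnext).1 t)

theorem Normalized.exists_tree_along (hM : M.Normalized) {p : Q} (st : List (Alpha × Bool))
    {tEnd : List Bool → Alpha} (hEnd : M.AcceptsFrom (M.follow p st) tEnd) :
    ∃ t, M.AcceptsFrom p t ∧
      ∀ w, M.runFrom p t (st.map Prod.snd ++ w) = M.runFrom (M.follow p st) tEnd w := by
  induction st generalizing p with
  | nil => exact ⟨tEnd, hEnd, fun _ => rfl⟩
  | cons x st ih =>
    obtain ⟨tOn, hOn, hrun⟩ := ih hEnd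
    obtain ⟨tOff, hOff⟩ := hM.exists_acceptsFrom_next_not ⟨tOn, hOn⟩
    refine ⟨node x.1 x.2 tOn tOff, acceptsFrom_node hOn hOff, fun w => ?_⟩
    simpa [runFrom, node, follow] using hrun w

theorem Normalized.exists_acceptsFrom_of_follow (hM : M.Normalized) {p : Q}
    {st : List (Alpha × Bool)} (h : ∃ t, M.AcceptsFrom (M.follow p st) t) :
    ∃ t, M.AcceptsFrom p t :=
  let ⟨_, ht⟩ := h
  let ⟨t, hAcc, _⟩ := hM.exists_tree_along st ht
  ⟨t, hAcc⟩

theorem Normalized.exists_tree_pumping_loop (hM : M.Normalized) {q₁ : Q} {s : Alpha} {d : Bool}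
    {l : List (Alpha × Bool)} (hloop : M.follow q₁ ((s, d) :: l) = q₁)
    (heven : Even (M.maxRankOn q₁ ((s, d) :: l))) {B : List Bool → Alpha}
    (hB : M.AcceptsFrom (M.next q₁ s (!d)) B) :
    ∃ T, M.AcceptsFrom q₁ T ∧ ∃ (π : ℕ → Bool) (f : ℕ → ℕ), StrictMono f ∧
      ∀ k w, M.runFrom q₁ T (pref π (f k) ++ (!π (f k)) :: w) =
        M.runFrom (M.next q₁ s (!d)) B w := by
  set L := (s, d) :: l
  have hpos : 0 < L.length := by simp [L]
  set step : ℕ → Alpha × Bool := fun n => L[n % L.length]'(Nat.mod_lt n hpos)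
  set gs : ℕ → Q := fun n => M.follow q₁ (L.take (n % L.length))
  have hgs : ∀ n, gs (n + 1) = M.next (gs n) (step n).1 (step n).2 :=
    follow_take_mod_succ hloop hpos
  have hstart : ∀ {n}, n % L.length = 0 → gs n = q₁ ∧ step n = (s, d) := fun hn => by
    simp only [gs, step, hn]
    exact ⟨rfl, rfl⟩
  have hgs₀ : gs 0 = q₁ := (hstart (Nat.zero_mod _)).1
  have hlive : ∀ n, ∃ t, M.AcceptsFrom (gs n) t := fun n =>
    hM.exists_acceptsFrom_of_follow (st := L.drop (n % L.length) ++ [(s, !d)]) ⟨B, by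
      rwa [← follow_append, ← List.append_assoc, List.take_append_drop, follow_append, hloop]⟩
  have hsib : ∀ n, ∃ t, M.AcceptsFrom (M.next (gs n) (step n).1 (!(step n).2)) t ∧
      (n % L.length = 0 → t = B) := fun n => by
    by_cases hn : n % L.length = 0
    · obtain ⟨hgs, hstep⟩ := hstart hn
      exact ⟨B, by rwa [hgs, hstep], fun _ => rfl⟩
    · obtain ⟨t, ht⟩ := hM.exists_acceptsFrom_next_not (hgs n ▸ hlive (n + 1))
      exact ⟨t, ht, fun h => absurd h hn⟩
  choose sib hsib hsibB using hsib
  have hspine := acceptsFrom_spine hgs hsib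
    ((parityAccept_rank_follow_take_mod_iff hloop hpos).2 heven)
  refine ⟨spine step sib, hgs₀ ▸ hspine, fun n => (step n).2, (· * L.length),
    strictMono_mul_right_of_pos hpos, fun k w => ?_⟩
  have hk : k * L.length % L.length = 0 := Nat.mul_mod_left k _
  have hbranch := runFrom_spine_branch (sib := sib) hgs (k * L.length) w
  rw [hgs₀] at hbranch
  exact hbranch.trans (by rw [hsibB _ hk, (hstart hk).1, (hstart hk).2])

theorem Normalized.exists_infinite_antichain_run_eq (hM : M.Normalized) {q : Q}
    (hq : M.Productive q) (hrep : ReplicatedByAccLoop M q) :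
    ∃ t ∈ M.Lang, ∃ S : Set (List Bool), S.Infinite ∧ (∀ v ∈ S, M.run t v = q) ∧
      IsAntichain (· <+: ·) S := by
  obtain ⟨t₀, ht₀, v₀, rfl⟩ := hq
  obtain ⟨q₁, s, d, l, ⟨-, hloop⟩, heven, rest, hrest⟩ := hrep
  have hq : M.AcceptsFrom (M.follow (M.next q₁ s !d) rest) (subtree t₀ v₀) :=
    hrest ▸ acceptsFrom_subtree ht₀ v₀
  obtain ⟨B, hB, hBrun⟩ := hM.exists_tree_along rest hq
  obtain ⟨T₁, hT₁, π, f, hf, hT₁run⟩ := hM.exists_tree_pumping_loop hloop heven hB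
  obtain ⟨steps, rfl⟩ := hM.1 q₁
  obtain ⟨T, hT, hTrun⟩ := hM.exists_tree_along steps hT₁
  set u : ℕ → List Bool := fun k =>
    steps.map Prod.snd ++ (pref π (f k) ++ (!π (f k)) :: rest.map Prod.snd)
  have hincomp : ∀ a b, a ≠ b → ¬ u a <+: u b := fun a b hab => by
    rw [List.prefix_append_right_inj]
    exact not_isPrefix_pref_append_not π (hf.injective.ne hab) _ _
  refine ⟨T, hT, Set.range u, Set.infinite_range_of_injective fun a b hab => ?_, ?_, ?_⟩
  · by_contra hne
    exact hincomp a b hne (hab ▸ List.prefix_refl _)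
  · rintro _ ⟨k, rfl⟩
    have := hBrun []
    rw [List.append_nil] at this
    rw [run, hTrun, hT₁run, this]
    exact hrest
  · rintro _ ⟨a, rfl⟩ _ ⟨b, rfl⟩ hne
    exact hincomp a b (ne_of_apply_ne _ hne)

theorem replicatedByAccLoop_of_infinite_antichain [Finite Q] {t : List Bool → Alpha}
    (ht : t ∈ M.Lang) {S : Set (List Bool)} (hS : S.Infinite) (hanti : IsAntichain (· <+: ·) S)
    {q : Q} (hq : ∀ v ∈ S, M.run t v = q) : ReplicatedByAccLoop M q := by
  obtain ⟨π, hbranch⟩ := exists_path_frequently_branch hS hanti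
  set ρ : ℕ → Q := fun n => M.run t (pref π n)
  obtain ⟨q₁, hq₁⟩ : ∃ q₁, ∃ᶠ m in atTop, (∃ v ∈ S, pref π m ++ [!π m] <+: v) ∧ ρ m = q₁ :=
    frequently_exists.1 (hbranch.mono fun m h => ⟨ρ m, h, rfl⟩)
  obtain ⟨hR, hle⟩ := frequently_eq_sSup_and_eventually_le (f := fun n => M.rank (ρ n))
    ((Set.finite_range M.rank).subset (Set.range_comp_subset_range ρ M.rank))
  obtain ⟨N, hN⟩ := eventually_atTop.1 hle
  obtain ⟨m₁, hm₁, ⟨_, hv, w, rfl⟩, hρm₁⟩ := frequently_atTop.1 hq₁ N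
  obtain ⟨n₀, hn₀, hρn₀⟩ := frequently_atTop.1 hR (m₁ + 1)
  obtain ⟨m₂, hm₂, -, hρm₂⟩ := frequently_atTop.1 hq₁ n₀
  obtain ⟨k, rfl⟩ := Nat.exists_eq_add_of_le (show m₁ + 1 ≤ m₂ by omega)
  obtain ⟨rest, hrest⟩ := exists_follow_eq_runFrom M (M.next q₁ (t (pref π m₁)) (!π m₁))
    (subtree t (pref π m₁ ++ [!π m₁])) w
  have hρm₁' : M.runFrom M.init t (pref π m₁) = q₁ := hρm₁
  have hloop : (t (pref π m₁), π m₁) :: (List.range' (m₁ + 1) k).map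
      (fun n => (t (pref π n), π n)) = (List.range' m₁ (k + 1)).map fun n => (t (pref π n), π n) :=
    by rw [List.range'_succ, List.map_cons]
  refine ⟨q₁, t (pref π m₁), π m₁, (List.range' (m₁ + 1) k).map fun n => (t (pref π n), π n),
    ⟨List.cons_ne_nil _ _, ?_⟩, ?_, rest, ?_⟩
  · have hfollow := follow_map_range' M M.init t π m₁ (k + 1)
    rw [hρm₁', show m₁ + (k + 1) = m₁ + 1 + k by omega] at hfollow
    rw [hloop, hfollow]
    exact hρm₂
  · rw [hloop, ← hρm₁', maxRankOn_map_range' M _ t π (fun n h _ => hN n (by omega))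
      (n₀ := n₀) ⟨by omega, by omega⟩ hρn₀]
    exact ht π
  · rw [← hq _ hv, run, runFrom_append, runFrom_concat, hρm₁']
    exact hrest

end DPTA

theorem replication_lemma_general {Alpha Q : Type} [Fintype Q]
    (M : DPTA Alpha Q) (hM : M.Normalized) (q : Q) :
    (∃ t ∈ M.Lang, ∃ S : Set (List Bool), S.Infinite ∧
        (∀ v ∈ S, M.run t v = q) ∧
        (∀ v ∈ S, ∀ w ∈ S, v ≠ w → ¬ v <+: w ∧ ¬ w <+: v)) ↔
      (M.Productive q ∧ ReplicatedByAccLoop M q) := by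
  constructor
  · rintro ⟨t, ht, S, hS, hq, hanti⟩
    obtain ⟨v, hv⟩ := hS.nonempty
    exact ⟨⟨t, ht, v, hq v hv⟩, DPTA.replicatedByAccLoop_of_infinite_antichain ht hS
      (fun v hv w hw hne => (hanti v hv w hw hne).1) hq⟩
  · rintro ⟨hprod, hrep⟩
    obtain ⟨t, ht, S, hS, hq, hanti⟩ := hM.exists_infinite_antichain_run_eq hprod hrep
    exact ⟨t, ht, S, hS, hq, fun v hv w hw hne => ⟨hanti hv hw hne, hanti hw hv hne.symm⟩⟩

/-- Replication Lemma: a state occurs in infinitely many pairwise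
incomparable nodes of some accepting run iff it is productive and replicated by an
accepting loop. -/
theorem replication_lemma {Alpha Q : Type} [Fintype Alpha] [Nonempty Alpha] [Fintype Q]
    (M : DPTA Alpha Q) (hM : M.Normalized) (q : Q) :
    (∃ t ∈ M.Lang, ∃ S : Set (List Bool), S.Infinite ∧
        (∀ v ∈ S, M.run t v = q) ∧
        (∀ v ∈ S, ∀ w ∈ S, v ≠ w → ¬ v <+: w ∧ ¬ w <+: v)) ↔
      (M.Productive q ∧ ReplicatedByAccLoop M q) :=
  replication_lemma_general M hM q
end

section
/- Let A be a deterministic parity word automaton over a finite nonempty alphabet Σ whose transition graph is strongly connected (every state is reachable by a path from every other state, and all states are reachable from q₀). Let ι ∈ {0,1} and κ ≥ ι be such that A contains a (ι,κ)-flower, A contains no (ι',κ')-flower with κ' − ι' > κ − ι (ι' ∈ {0,1}), and A contains no (ι,κ)‾-flower (i.e. no (1,κ+1)-flower when ι = 0 and no (0,κ−1)-flower when ι = 1). Then L(A) ≡_W L_{(ι,κ)}. -/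
open Filter

/-- Parity acceptance: the largest value occurring infinitely often is even. -/
def ParityAccept (f : ℕ → ℕ) : Prop :=
  Even (sSup {r : ℕ | ∃ᶠ n in atTop, f n = r})

/-- A deterministic parity word automaton over alphabet `Alpha` with state set `Q`. -/
structure DPWA (Alpha : Type) (Q : Type) where
  init : Q
  delta : Q → Alpha → Q
  rank : Q → ℕ

namespace DPWA

variable {Alpha Q : Type}

/-- The state of the run of `M` on `w` after `n` letters. -/
def run (M : DPWA Alpha Q) (w : ℕ → Alpha) : ℕ → Q
  | 0 => M.init
  | n + 1 => M.delta (run M w n) (w n)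

/-- The language recognised by `M`. -/
def Lang (M : DPWA Alpha Q) : Set (ℕ → Alpha) :=
  {w | ParityAccept fun n => M.rank (M.run w n)}

/-- The state reached from `q` following a finite word. -/
def follow (M : DPWA Alpha Q) (q : Q) (steps : List Alpha) : Q :=
  steps.foldl M.delta q

/-- All states visited along a path, the starting state included. -/
def statesOn (M : DPWA Alpha Q) (q : Q) (steps : List Alpha) : List Q :=
  List.scanl M.delta q steps

/-- The largest rank of a state visited along a path. -/
def maxRankOn (M : DPWA Alpha Q) (q : Q) (steps : List Alpha) : ℕ :=
  ((M.statesOn q steps).map M.rank).foldr max 0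

/-- `steps` is a loop at `q` (a path of positive length from `q` to `q`). -/
def IsLoop (M : DPWA Alpha Q) (q : Q) (steps : List Alpha) : Prop :=
  steps ≠ [] ∧ M.follow q steps = q

/-- `M` contains an `(i,k)`-flower. -/
def HasFlower (M : DPWA Alpha Q) (i k : ℕ) : Prop :=
  ∃ (q : Q) (lam : ℕ → List Alpha),
    (∀ j, i ≤ j → j ≤ k → M.IsLoop q (lam j) ∧ M.maxRankOn q (lam j) % 2 = j % 2) ∧
    (∀ j, i ≤ j → j < k → M.maxRankOn q (lam j) < M.maxRankOn q (lam (j + 1)))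

/-- `q` is reachable from the initial state. -/
def Reachable (M : DPWA Alpha Q) (q : Q) : Prop :=
  ∃ steps, M.follow M.init steps = q

end DPWA

/-- Wadge reducibility. -/
def WadgeLE {X Y : Type} [TopologicalSpace X] [TopologicalSpace Y]
    (A : Set X) (B : Set Y) : Prop :=
  ∃ φ : X → Y, Continuous φ ∧ A = φ ⁻¹' B

/-- The alphabet `{i, i+1, …, k}`. -/
def IdxAlpha (i k : ℕ) : Type := {n : ℕ // i ≤ n ∧ n ≤ k}

instance (i k : ℕ) : TopologicalSpace (IdxAlpha i k) := ⊥
instance (i k : ℕ) : DiscreteTopology (IdxAlpha i k) := ⟨rfl⟩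

/-- The parity language `L_{(i,k)}`: sequences over `{i,…,k}` whose largest value
occurring infinitely often is even. -/
def Lidx (i k : ℕ) : Set (ℕ → IdxAlpha i k) :=
  {w | Even (sSup {r : ℕ | ∃ᶠ n in atTop, (w n).1 = r})}

/-!
Call a set of states a cycle set if it is the set of states of a loop. For `L(A) ≤_W L_{(ι,κ)}`,
relabel the states by ranks in `[ι, κ]` so that every cycle set keeps the parity of its largest
rank, and send a word to the sequence of new ranks along its run; the largest rank and the largest
new rank seen infinitely often are those of one cycle set, the loop traced by the run between two
late visits of a recurrent state. The new rank of `s` is `κ` minus the length of the longest chain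
`C₀ ⊆ C₁ ⊆ ⋯` of cycle sets with alternating parities that starts at a cycle set on which `s` has
the largest rank. Such chains are flowers, so maximality bounds their length by `κ - ι`; by strong
connectivity the cycle set of all states extends any chain ending at the wrong parity, so every
longest chain, and the maximal flower, ends at the parity of the largest rank. For
`L_{(ι,κ)} ≤_W L(A)`, read a word `v` as `p λ_{v 0} λ_{v 1} ⋯`, with `p` a path to the centre of the
`(ι,κ)`-flower and `λ_j` its petals, repeated to a common length: the largest rank seen infinitely
often is that of `λ_J`, for `J` the largest letter occurring infinitely often.
-/

theorem Nat.sSup_frequently_eq {f : ℕ → ℕ} {r : ℕ} (hle : ∀ᶠ n in atTop, f n ≤ r)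
    (heq : ∃ᶠ n in atTop, f n = r) : sSup {x | ∃ᶠ n in atTop, f n = x} = r := by
  have hbdd : ∀ x ∈ {x | ∃ᶠ n in atTop, f n = x}, x ≤ r := fun x hx => by
    obtain ⟨n, rfl, hn⟩ := (Frequently.and_eventually hx hle).exists
    exact hn
  exact le_antisymm (csSup_le' hbdd) (le_csSup ⟨r, hbdd⟩ heq)

theorem Nat.exists_eventually_le_frequently_eq {f : ℕ → ℕ} {B : ℕ}
    (hB : ∀ᶠ n in atTop, f n ≤ B) : ∃ r, (∀ᶠ n in atTop, f n ≤ r) ∧ ∃ᶠ n in atTop, f n = r := by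
  induction B with
  | zero => exact ⟨0, hB, hB.frequently.mono fun n hn => by omega⟩
  | succ B ih =>
    by_cases hfreq : ∃ᶠ n in atTop, f n = B + 1
    · exact ⟨B + 1, hB, hfreq⟩
    · exact ih ((hB.and (not_frequently.1 hfreq)).mono fun n hn => by omega)

theorem exists_frequently_eq {γ : Type*} [Finite γ] (u : ℕ → γ) :
    ∃ c, ∃ᶠ n in atTop, u n = c := by
  obtain ⟨c, hc⟩ := Finite.exists_infinite_fiber u
  exact ⟨c, Nat.frequently_atTop_iff_infinite.2 (Set.infinite_coe_iff.1 hc)⟩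

/-- `p · blocks 0 · blocks 1 ⋯` when every block has length `L`; `a` is a dummy default. -/
def blockWord {α : Type*} (a : α) (p : List α) (L : ℕ) (blocks : ℕ → List α) (n : ℕ) : α :=
  if n < p.length then p.getD n a else (blocks ((n - p.length) / L)).getD ((n - p.length) % L) a

section BlockWord

variable {α : Type*} (a : α) (p : List α) {L : ℕ} (blocks : ℕ → List α)

theorem map_range_blockWord : (List.range p.length).map (blockWord a p L blocks) = p := by
  refine List.ext_getElem (by simp) fun n h₁ h₂ => ?_
  simp [blockWord, h₂]

theorem map_range_blockWord_add {b : ℕ} (hlen : (blocks b).length = L) {t : ℕ} (ht : t ≤ L) :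
    (List.range t).map (fun j => blockWord a p L blocks (p.length + L * b + j)) =
      (blocks b).take t := by
  refine List.ext_getElem (by simp [hlen, ht]) fun j h₁ h₂ => ?_
  have hj : j < L := by simp only [List.length_map, List.length_range] at h₁; omega
  have hdiv : (L * b + j) / L = b := by
    rw [Nat.mul_add_div (by omega), Nat.div_eq_of_lt hj, Nat.add_zero]
  simp [blockWord, hdiv, Nat.mod_eq_of_lt hj, Nat.add_assoc, List.getElem?_eq_getElem (hlen ▸ hj)]

end BlockWord

namespace DPWA

variable {Alpha Q : Type} (M : DPWA Alpha Q)

theorem follow_append (q : Q) (l₁ l₂ : List Alpha) :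
    M.follow q (l₁ ++ l₂) = M.follow (M.follow q l₁) l₂ :=
  List.foldl_append

theorem mem_statesOn_iff {q s : Q} {l : List Alpha} :
    s ∈ M.statesOn q l ↔ ∃ t ≤ l.length, M.follow q (l.take t) = s := by
  simp [statesOn, follow, List.mem_iff_getElem, List.getElem_scanl]

theorem self_mem_statesOn (q : Q) (l : List Alpha) : q ∈ M.statesOn q l :=
  M.mem_statesOn_iff.2 ⟨0, Nat.zero_le _, rfl⟩

theorem follow_mem_statesOn (q : Q) (l : List Alpha) : M.follow q l ∈ M.statesOn q l :=
  M.mem_statesOn_iff.2 ⟨l.length, le_rfl, by rw [List.take_length]⟩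

theorem mem_statesOn_append {q s : Q} {l₁ l₂ : List Alpha} :
    s ∈ M.statesOn q (l₁ ++ l₂) ↔ s ∈ M.statesOn q l₁ ∨ s ∈ M.statesOn (M.follow q l₁) l₂ := by
  have hcons : M.statesOn (M.follow q l₁) l₂ =
      M.follow q l₁ :: (M.statesOn (M.follow q l₁) l₂).tail := by
    cases l₂ <;> simp [statesOn]
  rw [statesOn, List.scanl_append, List.mem_append, ← statesOn, ← follow, ← statesOn, hcons,
    List.mem_cons]
  constructor
  · rintro (h | h)
    · exact Or.inl h
    · exact Or.inr (Or.inr h)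
  · rintro (h | rfl | h)
    · exact Or.inl h
    · exact Or.inl (M.follow_mem_statesOn q l₁)
    · exact Or.inr h

theorem maxRankOn_eq_sup [DecidableEq Q] (q : Q) (l : List Alpha) :
    M.maxRankOn q l = (M.statesOn q l).toFinset.sup M.rank := by
  rw [maxRankOn]
  induction M.statesOn q l with
  | nil => rfl
  | cons s L ih => simp [ih]

theorem maxRankOn_congr {q q' : Q} {l l' : List Alpha}
    (h : ∀ s, s ∈ M.statesOn q l ↔ s ∈ M.statesOn q' l') : M.maxRankOn q l = M.maxRankOn q' l' := by
  classical
  rw [maxRankOn_eq_sup, maxRankOn_eq_sup]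
  congr 1
  ext s
  simp only [List.mem_toFinset, h]

theorem rank_le_maxRankOn {q s : Q} {l : List Alpha} (hs : s ∈ M.statesOn q l) :
    M.rank s ≤ M.maxRankOn q l := by
  classical
  exact M.maxRankOn_eq_sup q l ▸ Finset.le_sup (List.mem_toFinset.2 hs)

theorem exists_rank_eq_maxRankOn (q : Q) (l : List Alpha) :
    ∃ s ∈ M.statesOn q l, M.rank s = M.maxRankOn q l := by
  classical
  obtain ⟨s, hs, h⟩ := Finset.exists_mem_eq_sup _ ⟨q, List.mem_toFinset.2 (M.self_mem_statesOn q l)⟩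
    M.rank
  exact ⟨s, List.mem_toFinset.1 hs, by rw [maxRankOn_eq_sup, h]⟩

theorem follow_flatten_replicate {q : Q} {l : List Alpha} (h : M.follow q l = q) (r : ℕ) :
    M.follow q (List.replicate r l).flatten = q := by
  induction r with
  | zero => rfl
  | succ r ih => rw [List.replicate_succ, List.flatten_cons, M.follow_append, h, ih]

theorem mem_statesOn_flatten_replicate {q s : Q} {l : List Alpha} (h : M.follow q l = q)
    {r : ℕ} (hr : 0 < r) : s ∈ M.statesOn q (List.replicate r l).flatten ↔ s ∈ M.statesOn q l := by
  induction r, hr using Nat.le_induction with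
  | base => simp
  | succ r hr ih =>
    rw [List.replicate_succ, List.flatten_cons, M.mem_statesOn_append, h, ih, or_self]

theorem run_add (w : ℕ → Alpha) (m n : ℕ) :
    M.run w (m + n) = M.follow (M.run w m) ((List.range n).map fun j => w (m + j)) := by
  induction n with
  | zero => rfl
  | succ n ih =>
    rw [List.range_succ, List.map_append, M.follow_append, ← ih]
    rfl

theorem continuous_run [TopologicalSpace Alpha] [DiscreteTopology Alpha] [TopologicalSpace Q]
    [DiscreteTopology Q] (n : ℕ) : Continuous fun w => M.run w n := by
  induction n with
  | zero => exact continuous_const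
  | succ n ih =>
    exact (continuous_of_discreteTopology (f := fun p : Q × Alpha => M.delta p.1 p.2)).comp
      (ih.prodMk (continuous_apply n))

theorem run_blockWord {q : Q} {p : List Alpha} (hp : M.follow M.init p = q) {L : ℕ}
    {blocks : ℕ → List Alpha} (hblocks : ∀ b, (blocks b).length = L ∧ M.follow q (blocks b) = q)
    (a : Alpha) (b : ℕ) {t : ℕ} (ht : t ≤ L) :
    M.run (blockWord a p L blocks) (p.length + L * b + t) = M.follow q ((blocks b).take t) := by
  have hstart : ∀ b, M.run (blockWord a p L blocks) (p.length + L * b) = q := by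
    intro b
    induction b with
    | zero =>
      have h0 := M.run_add (blockWord a p L blocks) 0 p.length
      simp only [Nat.zero_add] at h0
      rw [Nat.mul_zero, Nat.add_zero, h0, map_range_blockWord]
      exact hp
    | succ b ih =>
      rw [Nat.mul_succ, ← Nat.add_assoc, M.run_add, ih, map_range_blockWord_add a p blocks
        (hblocks b).1 le_rfl, ← (hblocks b).1, List.take_length, (hblocks b).2]
  rw [M.run_add, hstart, map_range_blockWord_add a p blocks (hblocks b).1 ht]

section CycleSet

variable [DecidableEq Q]

def IsCycleSet (C : Finset Q) : Prop :=
  ∃ q l, M.IsLoop q l ∧ (M.statesOn q l).toFinset = C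

variable {M}

theorem IsCycleSet.exists_loop {C : Finset Q} (hC : M.IsCycleSet C) {a : Q} (ha : a ∈ C) :
    ∃ l, M.IsLoop a l ∧ (M.statesOn a l).toFinset = C := by
  obtain ⟨q, l, ⟨hne, hloop⟩, rfl⟩ := hC
  obtain ⟨t, -, hta⟩ := M.mem_statesOn_iff.1 (List.mem_toFinset.1 ha)
  have hback : M.follow a (l.drop t) = q := by
    rw [← hta, ← M.follow_append, List.take_append_drop, hloop]
  refine ⟨l.drop t ++ l.take t, ⟨?_, ?_⟩, ?_⟩
  · rw [Ne, List.append_eq_nil_iff]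
    rintro ⟨hd, ht⟩
    exact hne (by rw [← List.take_append_drop t l, hd, ht]; rfl)
  · rw [M.follow_append, hback, hta]
  · ext s
    conv_rhs => rw [← List.take_append_drop t l]
    simp only [List.mem_toFinset, M.mem_statesOn_append, hback, hta, or_comm]

theorem IsCycleSet.nonempty {C : Finset Q} (hC : M.IsCycleSet C) : C.Nonempty := by
  obtain ⟨q, l, -, rfl⟩ := hC
  exact ⟨q, List.mem_toFinset.2 (M.self_mem_statesOn q l)⟩

theorem IsCycleSet.union {C D : Finset Q} (hC : M.IsCycleSet C) (hD : M.IsCycleSet D) {q : Q}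
    (hqC : q ∈ C) (hqD : q ∈ D) : M.IsCycleSet (C ∪ D) := by
  obtain ⟨l₁, ⟨hne, hl₁⟩, rfl⟩ := hC.exists_loop hqC
  obtain ⟨l₂, ⟨-, hl₂⟩, rfl⟩ := hD.exists_loop hqD
  refine ⟨q, l₁ ++ l₂, ⟨by simp [hne], by rw [M.follow_append, hl₁, hl₂]⟩, ?_⟩
  ext s
  simp only [List.mem_toFinset, Finset.mem_union, M.mem_statesOn_append, hl₁]

theorem exists_isCycleSet_mem_mem [Nonempty Alpha]
    (hconn : ∀ p q : Q, ∃ steps, M.follow p steps = q) (p q : Q) : ∃ C, M.IsCycleSet C ∧ p ∈ C ∧ q ∈ C := by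
  obtain ⟨u, hu⟩ := hconn p q
  obtain a : Alpha := Classical.arbitrary Alpha
  obtain ⟨v, hv⟩ := hconn (M.delta q a) p
  refine ⟨_, ⟨p, u ++ a :: v, ⟨by simp, by rw [M.follow_append, hu]; exact hv⟩, rfl⟩,
    List.mem_toFinset.2 (M.self_mem_statesOn _ _), List.mem_toFinset.2 ?_⟩
  exact M.mem_statesOn_append.2 (Or.inl (hu ▸ M.follow_mem_statesOn p u))

theorem isCycleSet_univ [Fintype Q] [Nonempty Alpha]
    (hconn : ∀ p q : Q, ∃ steps, M.follow p steps = q) : M.IsCycleSet Finset.univ := by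
  have hcover : ∀ S : Finset Q, ∃ C, M.IsCycleSet C ∧ M.init ∈ C ∧ S ⊆ C := by
    intro S
    induction S using Finset.induction_on with
    | empty =>
      obtain ⟨C, hC, hinit, -⟩ := exists_isCycleSet_mem_mem hconn M.init M.init
      exact ⟨C, hC, hinit, Finset.empty_subset C⟩
    | insert s S _ ih =>
      obtain ⟨C, hC, hinit, hSC⟩ := ih
      obtain ⟨D, hD, hinitD, hsD⟩ := exists_isCycleSet_mem_mem hconn M.init s
      refine ⟨C ∪ D, hC.union hD hinit hinitD, Finset.mem_union_left _ hinit, ?_⟩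
      exact Finset.insert_subset (Finset.mem_union_right _ hsD)
        (hSC.trans Finset.subset_union_left)
  obtain ⟨C, hC, -, hsub⟩ := hcover Finset.univ
  rwa [Finset.univ_subset_iff.1 hsub] at hC

theorem isCycleSet_image_Icc {w : ℕ → Alpha} {t₀ t₁ : ℕ} (hlt : t₀ < t₁)
    (heq : M.run w t₀ = M.run w t₁) : M.IsCycleSet ((Finset.Icc t₀ t₁).image (M.run w)) := by
  refine ⟨M.run w t₀, (List.range (t₁ - t₀)).map fun j => w (t₀ + j), ⟨?_, ?_⟩, ?_⟩
  · simp only [ne_eq, List.map_eq_nil_iff, List.range_eq_nil]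
    omega
  · rw [← M.run_add, Nat.add_sub_cancel' hlt.le, heq]
  · ext s
    simp only [List.mem_toFinset, M.mem_statesOn_iff, List.length_map, List.length_range,
      ← List.map_take, List.take_range, Finset.mem_image, Finset.mem_Icc]
    constructor
    · rintro ⟨t, ht, rfl⟩
      exact ⟨t₀ + t, by omega, by rw [M.run_add, min_eq_left ht]⟩
    · rintro ⟨t, ht, rfl⟩
      refine ⟨t - t₀, by omega, ?_⟩
      rw [min_eq_left (by omega), ← M.run_add, Nat.add_sub_cancel' ht.1]

end CycleSet

def IsFlowerAt (q : Q) (lam : ℕ → List Alpha) (i k : ℕ) : Prop :=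
  (∀ j, i ≤ j → j ≤ k → M.IsLoop q (lam j) ∧ M.maxRankOn q (lam j) % 2 = j % 2) ∧
    ∀ j, i ≤ j → j < k → M.maxRankOn q (lam j) < M.maxRankOn q (lam (j + 1))

variable {M}

theorem IsFlowerAt.maxRankOn_mono {q : Q} {lam : ℕ → List Alpha} {i k : ℕ}
    (h : M.IsFlowerAt q lam i k) {j₁ j₂ : ℕ} (hij₁ : i ≤ j₁) (hj₁₂ : j₁ ≤ j₂) (hj₂k : j₂ ≤ k) :
    M.maxRankOn q (lam j₁) ≤ M.maxRankOn q (lam j₂) := by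
  induction j₂, hj₁₂ using Nat.le_induction with
  | base => exact le_rfl
  | succ n hn ih => exact (ih (by omega)).trans (h.2 n (by omega) (by omega)).le

theorem IsFlowerAt.exists_uniform {q : Q} {lam : ℕ → List Alpha} {i k : ℕ}
    (h : M.IsFlowerAt q lam i k) :
    ∃ L lam', (∀ j, i ≤ j → j ≤ k → (lam' j).length = L) ∧ M.IsFlowerAt q lam' i k := by
  set L := ∏ j ∈ Finset.Icc i k, (lam j).length
  have hpos : ∀ j, i ≤ j → j ≤ k → 0 < (lam j).length := fun j hij hjk =>
    List.length_pos_iff.2 (h.1 j hij hjk).1.1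
  have hL : 0 < L := Finset.prod_pos fun j hj =>
    hpos j (Finset.mem_Icc.1 hj).1 (Finset.mem_Icc.1 hj).2
  have hdvd : ∀ j, i ≤ j → j ≤ k → (lam j).length ∣ L := fun j hij hjk =>
    Finset.dvd_prod_of_mem _ (Finset.mem_Icc.2 ⟨hij, hjk⟩)
  have hr : ∀ j, i ≤ j → j ≤ k → 0 < L / (lam j).length := fun j hij hjk =>
    Nat.div_pos (Nat.le_of_dvd hL (hdvd j hij hjk)) (hpos j hij hjk)
  set lam' := fun j => (List.replicate (L / (lam j).length) (lam j)).flatten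
  have hrank : ∀ j, i ≤ j → j ≤ k → M.maxRankOn q (lam' j) = M.maxRankOn q (lam j) :=
    fun j hij hjk => M.maxRankOn_congr fun s =>
      M.mem_statesOn_flatten_replicate (h.1 j hij hjk).1.2 (hr j hij hjk)
  have hlen : ∀ j, i ≤ j → j ≤ k → (lam' j).length = L := fun j hij hjk => by
    simp only [lam', List.length_flatten, List.map_replicate, List.sum_replicate, smul_eq_mul]
    exact Nat.div_mul_cancel (hdvd j hij hjk)
  refine ⟨L, lam', hlen, fun j hij hjk => ⟨⟨?_, ?_⟩, ?_⟩, fun j hij hjk => ?_⟩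
  · exact List.ne_nil_of_length_pos (hlen j hij hjk ▸ hL)
  · exact M.follow_flatten_replicate (h.1 j hij hjk).1.2 _
  · rw [hrank j hij hjk]
    exact (h.1 j hij hjk).2
  · rw [hrank j hij hjk.le, hrank (j + 1) (by omega) hjk]
    exact h.2 j hij hjk

section Chains

variable [DecidableEq Q]

/-- The loop through all states is the new petal. -/
theorem HasFlower.succ [Fintype Q] {i k : ℕ} (h : M.HasFlower i k) (hik : i ≤ k)
    (huniv : M.IsCycleSet Finset.univ) (hk : k % 2 ≠ Finset.univ.sup M.rank % 2) :
    M.HasFlower i (k + 1) := by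
  obtain ⟨q, lam, hloops, hsteps⟩ := h
  obtain ⟨L, hL, hLstates⟩ := huniv.exists_loop (Finset.mem_univ q)
  have hLrank : M.maxRankOn q L = Finset.univ.sup M.rank := by
    rw [M.maxRankOn_eq_sup, hLstates]
  have hlt : M.maxRankOn q (lam k) < M.maxRankOn q L := by
    have hle : M.maxRankOn q (lam k) ≤ M.maxRankOn q L := by
      rw [hLrank, M.maxRankOn_eq_sup]
      exact Finset.sup_mono (Finset.subset_univ _)
    have := (hloops k hik le_rfl).2
    omega
  refine ⟨q, Function.update lam (k + 1) L, fun j hij hjk => ?_, fun j hij hjk => ?_⟩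
  · rcases eq_or_lt_of_le hjk with rfl | hjk
    · rw [Function.update_self, hLrank]
      exact ⟨hL, by omega⟩
    · rw [Function.update_of_ne (by omega)]
      exact hloops j hij (by omega)
  · rw [Function.update_of_ne (by omega)]
    rcases eq_or_lt_of_le (Nat.le_of_lt_succ hjk) with rfl | hjk
    · rwa [Function.update_self]
    · rw [Function.update_of_ne (by omega)]
      exact hsteps j hij hjk

variable (M) in
def IsAltChain (c : ℕ → Finset Q) (m : ℕ) : Prop :=
  (∀ j ≤ m, M.IsCycleSet (c j)) ∧
    ∀ j < m, c j ⊆ c (j + 1) ∧ (c j).sup M.rank % 2 ≠ (c (j + 1)).sup M.rank % 2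

namespace IsAltChain

variable {c : ℕ → Finset Q} {m : ℕ}

theorem subset (h : M.IsAltChain c m) {j j' : ℕ} (hjj' : j ≤ j') (hj' : j' ≤ m) :
    c j ⊆ c j' := by
  induction j', hjj' using Nat.le_induction with
  | base => exact subset_rfl
  | succ n _ ih => exact (ih (by omega)).trans (h.2 n (by omega)).1

theorem sup_lt (h : M.IsAltChain c m) {j : ℕ} (hj : j < m) :
    (c j).sup M.rank < (c (j + 1)).sup M.rank :=
  lt_of_le_of_ne (Finset.sup_mono (h.2 j hj).1) fun heq => (h.2 j hj).2 (by rw [heq])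

theorem sup_mod_two (h : M.IsAltChain c m) {j : ℕ} (hj : j ≤ m) :
    (c j).sup M.rank % 2 = ((c 0).sup M.rank + j) % 2 := by
  induction j with
  | zero => rfl
  | succ j ih =>
    have := (h.2 j hj).2
    have := ih (by omega)
    omega

theorem hasFlower (h : M.IsAltChain c m) :
    M.HasFlower ((c 0).sup M.rank % 2) ((c 0).sup M.rank % 2 + m) := by
  set ι := (c 0).sup M.rank % 2
  obtain ⟨q, hq⟩ := (h.1 0 (Nat.zero_le m)).nonempty
  have hloop : ∀ j, ∃ l, j ≤ m → M.IsLoop q l ∧ (M.statesOn q l).toFinset = c j := by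
    intro j
    by_cases hj : j ≤ m
    · obtain ⟨l, hl⟩ := (h.1 j hj).exists_loop (h.subset (Nat.zero_le j) hj hq)
      exact ⟨l, fun _ => hl⟩
    · exact ⟨[], fun hj' => absurd hj' hj⟩
  choose lam hlam using hloop
  have hrank : ∀ j ≤ m, M.maxRankOn q (lam j) = (c j).sup M.rank := fun j hj => by
    rw [M.maxRankOn_eq_sup, (hlam j hj).2]
  refine ⟨q, fun j => lam (j - ι), fun j hιj hjm => ?_, fun j hιj hjm => ?_⟩
  · rw [hrank _ (by omega), h.sup_mod_two (by omega)]
    exact ⟨(hlam _ (by omega)).1, by omega⟩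
  · rw [hrank _ (by omega), hrank _ (by omega), show j + 1 - ι = j - ι + 1 by omega]
    exact h.sup_lt (by omega)

theorem extend (h : M.IsAltChain c m) {D : Finset Q} (hD : M.IsCycleSet D) (hsub : c m ⊆ D)
    (hpar : (c m).sup M.rank % 2 ≠ D.sup M.rank % 2) :
    M.IsAltChain (Function.update c (m + 1) D) (m + 1) := by
  refine ⟨fun j hj => ?_, fun j hj => ?_⟩
  · rcases eq_or_lt_of_le hj with rfl | hj
    · rwa [Function.update_self]
    · rw [Function.update_of_ne (by omega)]
      exact h.1 j (by omega)
  · rw [Function.update_of_ne (by omega)]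
    rcases eq_or_lt_of_le (Nat.le_of_lt_succ hj) with rfl | hj
    · rw [Function.update_self]
      exact ⟨hsub, hpar⟩
    · rw [Function.update_of_ne (by omega)]
      exact h.2 j hj

theorem union (h : M.IsAltChain c m) {E : Finset Q} (hE : M.IsCycleSet E) {q : Q}
    (hq : q ∈ c 0) (hqE : q ∈ E) (hle : E.sup M.rank ≤ (c 0).sup M.rank) :
    M.IsAltChain (fun j => c j ∪ E) m := by
  have hsup : ∀ j ≤ m, (c j ∪ E).sup M.rank = (c j).sup M.rank := fun j hj => by
    rw [Finset.sup_union]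
    exact sup_eq_left.2 (hle.trans (Finset.sup_mono (h.subset (Nat.zero_le j) hj)))
  refine ⟨fun j hj => (h.1 j hj).union hE (h.subset (Nat.zero_le j) hj hq) hqE,
    fun j hj => ⟨Finset.union_subset_union_left (h.2 j hj).1, ?_⟩⟩
  rw [hsup j hj.le, hsup (j + 1) hj]
  exact (h.2 j hj).2

theorem exists_restart_of_subset (h : M.IsAltChain c m) {D : Finset Q} (hD : M.IsCycleSet D)
    (hsub : D ⊆ c 0) : ∃ c' m', m ≤ m' ∧ M.IsAltChain c' m' ∧ c' 0 = D := by
  by_cases hpar : D.sup M.rank % 2 = (c 0).sup M.rank % 2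
  · refine ⟨Function.update c 0 D, m, le_rfl, ⟨fun j hj => ?_, fun j hj => ?_⟩,
      Function.update_self ..⟩
    · rcases Nat.eq_zero_or_pos j with rfl | hj0
      · rwa [Function.update_self]
      · rw [Function.update_of_ne hj0.ne']
        exact h.1 j hj
    · rw [Function.update_of_ne (Nat.succ_ne_zero j)]
      rcases Nat.eq_zero_or_pos j with rfl | hj0
      · rw [Function.update_self, hpar]
        exact ⟨hsub.trans (h.2 0 hj).1, (h.2 0 hj).2⟩
      · rw [Function.update_of_ne hj0.ne']
        exact h.2 j hj
  · refine ⟨fun j => if j = 0 then D else c (j - 1), m + 1, Nat.le_succ m,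
      ⟨fun j hj => ?_, fun j hj => ?_⟩, if_pos rfl⟩
    · dsimp only
      split_ifs
      · exact hD
      · exact h.1 _ (by omega)
    · simp only [Nat.succ_ne_zero, if_false, Nat.add_sub_cancel]
      split_ifs with hj0
      · subst hj0
        exact ⟨hsub, hpar⟩
      · rw [show j = j - 1 + 1 by omega] at hj ⊢
        simpa using h.2 (j - 1) (by omega)

end IsAltChain

variable (M) in
def chainHeights (s : Q) : Set ℕ :=
  {m | ∃ c, M.IsAltChain c m ∧ s ∈ c 0 ∧ (c 0).sup M.rank = M.rank s}

variable (M) in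
open Classical in
/-- States that are the largest on no cycle set get the least value `K - d`. -/
noncomputable def relabel (K d : ℕ) (s : Q) : ℕ :=
  if (M.chainHeights s).Nonempty then K - sSup (M.chainHeights s) else K - d

theorem zero_mem_chainHeights {C : Finset Q} (hC : M.IsCycleSet C) {t : Q} (ht : t ∈ C)
    (htop : C.sup M.rank = M.rank t) : 0 ∈ M.chainHeights t :=
  ⟨fun _ => C, ⟨fun _ _ => hC, fun _ hj => absurd hj (Nat.not_lt_zero _)⟩, ht, htop⟩

variable {d : ℕ}

theorem bddAbove_chainHeights (hchain : ∀ c m, M.IsAltChain c m → m ≤ d) (s : Q) :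
    BddAbove (M.chainHeights s) :=
  ⟨d, fun _ ⟨c, hc, _⟩ => hchain c _ hc⟩

theorem sSup_chainHeights_le (hchain : ∀ c m, M.IsAltChain c m → m ≤ d) (s : Q) :
    sSup (M.chainHeights s) ≤ d :=
  csSup_le' fun _ ⟨c, hc, _⟩ => hchain c _ hc

theorem le_sSup_chainHeights (hchain : ∀ c m, M.IsAltChain c m → m ≤ d) {s : Q} {m : ℕ}
    (hm : m ∈ M.chainHeights s) : m ≤ sSup (M.chainHeights s) :=
  le_csSup (bddAbove_chainHeights hchain s) hm

/-- A longest chain ends at the parity of the largest rank, since otherwise the cycle set of all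
states would extend it. -/
theorem sSup_chainHeights_add_rank_mod_two [Fintype Q] (huniv : M.IsCycleSet Finset.univ)
    (hchain : ∀ c m, M.IsAltChain c m → m ≤ d) {s : Q} (hne : (M.chainHeights s).Nonempty) :
    (sSup (M.chainHeights s) + M.rank s) % 2 = Finset.univ.sup M.rank % 2 := by
  obtain ⟨c, hc, hs, hbot⟩ := Nat.sSup_mem hne (bddAbove_chainHeights hchain s)
  set m := sSup (M.chainHeights s)
  have htop : (c m).sup M.rank % 2 = Finset.univ.sup M.rank % 2 := by
    by_contra hpar
    have hlonger : m + 1 ∈ M.chainHeights s := by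
      refine ⟨_, hc.extend huniv (Finset.subset_univ _) hpar, ?_⟩
      rw [Function.update_of_ne (Nat.succ_ne_zero m).symm]
      exact ⟨hs, hbot⟩
    have := le_sSup_chainHeights hchain hlonger
    omega
  have := hc.sup_mod_two le_rfl
  omega

/-- Join a chain from `t` with `C`, then restart it at a cycle set on which `s` is maximal. -/
theorem sSup_chainHeights_le_of_mem (hchain : ∀ c m, M.IsAltChain c m → m ≤ d)
    {C : Finset Q} (hC : M.IsCycleSet C) {s t : Q} (hs : s ∈ C) (ht : t ∈ C)
    (htop : C.sup M.rank = M.rank t) (hne : (M.chainHeights s).Nonempty) :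
    sSup (M.chainHeights t) ≤ sSup (M.chainHeights s) := by
  obtain ⟨m₀, c₀, hc₀, hs₀, hbot₀⟩ := hne
  obtain ⟨c, hc, ht₀, hbot⟩ := Nat.sSup_mem ⟨0, zero_mem_chainHeights hC ht htop⟩
    (bddAbove_chainHeights hchain t)
  have hE : M.IsCycleSet (c₀ 0 ∪ C) := (hc₀.1 0 (Nat.zero_le _)).union hC hs₀ hs
  have hEsup : (c₀ 0 ∪ C).sup M.rank ≤ (c 0).sup M.rank := by
    rw [Finset.sup_union, hbot₀, htop, hbot]
    exact max_le (htop ▸ Finset.le_sup hs) le_rfl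
  obtain ⟨c', m', hm', hc', hbot'⟩ :=
    (hc.union hE ht₀ (Finset.mem_union_right _ ht) hEsup).exists_restart_of_subset
      (hc₀.1 0 (Nat.zero_le _)) (Finset.subset_union_left.trans Finset.subset_union_right)
  exact hm'.trans (le_sSup_chainHeights hchain ⟨c', hc', hbot' ▸ hs₀, hbot' ▸ hbot₀⟩)

theorem relabel_mem_Icc (hchain : ∀ c m, M.IsAltChain c m → m ≤ d) (K : ℕ) (s : Q) :
    K - d ≤ M.relabel K d s ∧ M.relabel K d s ≤ K := by
  have := sSup_chainHeights_le hchain s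
  unfold relabel
  split_ifs <;> omega

/-- On a cycle set the largest new rank sits at a state of largest old rank. -/
theorem sup_relabel_mod_two [Fintype Q] (huniv : M.IsCycleSet Finset.univ)
    (hchain : ∀ c m, M.IsAltChain c m → m ≤ d) {K : ℕ} (hdK : d ≤ K)
    (hK : K % 2 = Finset.univ.sup M.rank % 2) {C : Finset Q} (hC : M.IsCycleSet C) :
    C.sup (M.relabel K d) % 2 = C.sup M.rank % 2 := by
  obtain ⟨t, ht, htop⟩ := Finset.exists_mem_eq_sup C hC.nonempty M.rank
  have hne : (M.chainHeights t).Nonempty := ⟨0, zero_mem_chainHeights hC ht htop⟩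
  have hdt := sSup_chainHeights_le hchain t
  have hmax : C.sup (M.relabel K d) = M.relabel K d t := by
    refine le_antisymm (Finset.sup_le fun s hs => ?_) (Finset.le_sup ht)
    unfold relabel
    rw [if_pos hne]
    split_ifs with hs'
    · have := sSup_chainHeights_le_of_mem hchain hC hs ht htop hs'
      omega
    · omega
  have := sSup_chainHeights_add_rank_mod_two huniv hchain hne
  rw [hmax, htop, relabel, if_pos hne]
  omega

/-- On a run, the largest labels seen infinitely often are the largest labels of the loop traced
between two visits of a recurrent state, after all labels have settled. -/
theorem sSup_frequently_comp_run_mod_two [Fintype Q] {g : Q → ℕ}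
    (hg : ∀ C, M.IsCycleSet C → C.sup g % 2 = C.sup M.rank % 2) (w : ℕ → Alpha) :
    sSup {r | ∃ᶠ n in atTop, g (M.run w n) = r} % 2 =
      sSup {r | ∃ᶠ n in atTop, M.rank (M.run w n) = r} % 2 := by
  obtain ⟨J₁, hle₁, heq₁⟩ := Nat.exists_eventually_le_frequently_eq (f := fun n => g (M.run w n))
    (Eventually.of_forall fun n => Finset.le_sup (Finset.mem_univ (M.run w n)))
  obtain ⟨J₂, hle₂, heq₂⟩ := Nat.exists_eventually_le_frequently_eq
    (f := fun n => M.rank (M.run w n))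
    (Eventually.of_forall fun n => Finset.le_sup (Finset.mem_univ (M.run w n)))
  rw [Nat.sSup_frequently_eq hle₁ heq₁, Nat.sSup_frequently_eq hle₂ heq₂]
  obtain ⟨q, hq⟩ := exists_frequently_eq (M.run w)
  obtain ⟨N, hN⟩ := eventually_atTop.1 (hle₁.and hle₂)
  obtain ⟨t₀, ht₀, hq₀⟩ := frequently_atTop.1 hq N
  obtain ⟨t₁, ht₁, hJ₁⟩ := frequently_atTop.1 heq₁ t₀
  obtain ⟨t₂, ht₂, hJ₂⟩ := frequently_atTop.1 heq₂ t₀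
  obtain ⟨t₃, ht₃, hq₃⟩ := frequently_atTop.1 hq (max t₁ t₂ + 1)
  have hsup : ∀ (f : Q → ℕ) (J t : ℕ), t₀ ≤ t → t < t₃ → f (M.run w t) = J →
      (∀ n ≥ N, f (M.run w n) ≤ J) → ((Finset.Icc t₀ t₃).image (M.run w)).sup f = J := by
    intro f J t ht₀t htt₃ hJ hbound
    rw [Finset.sup_image]
    refine le_antisymm (Finset.sup_le fun n hn => ?_) ?_
    · exact hbound n (by simp only [Finset.mem_Icc] at hn; omega)
    · exact hJ ▸ Finset.le_sup (f := f ∘ M.run w) (Finset.mem_Icc.2 ⟨ht₀t, htt₃.le⟩)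
  have hC := M.isCycleSet_image_Icc (w := w) (by omega : t₀ < t₃) (hq₀.trans hq₃.symm)
  rw [← hsup g J₁ t₁ ht₁ (by omega) hJ₁ fun n hn => (hN n hn).1,
    ← hsup M.rank J₂ t₂ ht₂ (by omega) hJ₂ fun n hn => (hN n hn).2]
  exact hg _ hC

theorem wadgeLE_lang_Lidx [Fintype Q] [TopologicalSpace Alpha]
    [DiscreteTopology Alpha] {i k : ℕ} {g : Q → ℕ} (hrange : ∀ s, i ≤ g s ∧ g s ≤ k)
    (hg : ∀ C, M.IsCycleSet C → C.sup g % 2 = C.sup M.rank % 2) :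
    WadgeLE M.Lang (Lidx i k) := by
  let _ : TopologicalSpace Q := ⊥
  have _ : DiscreteTopology Q := ⟨rfl⟩
  let φ : Q → IdxAlpha i k := fun s => ⟨g s, hrange s⟩
  refine ⟨fun w n => φ (M.run w n), continuous_pi fun n =>
    (continuous_of_discreteTopology (f := φ)).comp (M.continuous_run n), ?_⟩
  ext w
  simp only [Lang, Lidx, ParityAccept, Set.mem_ofPred_eq, Set.mem_preimage, Nat.even_iff]
  rw [M.sSup_frequently_comp_run_mod_two hg w]

end Chains

theorem sSup_frequently_rank_run_blockWord {q : Q} {p : List Alpha} (hp : M.follow M.init p = q)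
    {L : ℕ} {lam : ℕ → List Alpha} {i k : ℕ} (hlen : ∀ j, i ≤ j → j ≤ k → (lam j).length = L)
    (hflower : M.IsFlowerAt q lam i k) (a : Alpha) (w : ℕ → IdxAlpha i k) {J : ℕ}
    (hleJ : ∀ᶠ n in atTop, (w n).1 ≤ J) (heqJ : ∃ᶠ n in atTop, (w n).1 = J) :
    sSup {r | ∃ᶠ n in atTop, M.rank (M.run (blockWord a p L fun b => lam (w b).1) n) = r} =
      M.maxRankOn q (lam J) := by
  have hblocks : ∀ b, (lam (w b).1).length = L ∧ M.follow q (lam (w b).1) = q := fun b =>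
    ⟨hlen _ (w b).2.1 (w b).2.2, (hflower.1 _ (w b).2.1 (w b).2.2).1.2⟩
  obtain ⟨n₀, hn₀⟩ := heqJ.exists
  have hJ : i ≤ J ∧ J ≤ k := hn₀ ▸ (w n₀).2
  have hL : 0 < L := hlen J hJ.1 hJ.2 ▸ List.length_pos_iff.2 (hflower.1 J hJ.1 hJ.2).1.1
  refine Nat.sSup_frequently_eq ?_ ?_
  · obtain ⟨N, hN⟩ := eventually_atTop.1 hleJ
    refine eventually_atTop.2 ⟨p.length + L * N, fun m hm => ?_⟩
    have hb : N ≤ (m - p.length) / L := (Nat.le_div_iff_mul_le hL).2 (by rw [Nat.mul_comm]; omega)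
    have hdecomp : m = p.length + L * ((m - p.length) / L) + (m - p.length) % L := by
      have := Nat.div_add_mod (m - p.length) L
      omega
    rw [hdecomp, M.run_blockWord hp hblocks a _ (Nat.mod_lt _ hL).le]
    refine (M.rank_le_maxRankOn (M.mem_statesOn_iff.2 ⟨_, ?_, rfl⟩)).trans
      (hflower.maxRankOn_mono (w _).2.1 (hN _ hb) hJ.2)
    rw [(hblocks _).1]
    exact (Nat.mod_lt _ hL).le
  · obtain ⟨s, hs, hsrank⟩ := M.exists_rank_eq_maxRankOn q (lam J)
    obtain ⟨t, ht, rfl⟩ := M.mem_statesOn_iff.1 hs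
    refine frequently_atTop.2 fun N => ?_
    obtain ⟨b, hb, hwb⟩ := frequently_atTop.1 heqJ N
    refine ⟨p.length + L * b + t, by nlinarith, ?_⟩
    rw [M.run_blockWord hp hblocks a b (hlen J hJ.1 hJ.2 ▸ ht), hwb, hsrank]

theorem wadgeLE_Lidx_lang [Nonempty Alpha] [TopologicalSpace Alpha] [DiscreteTopology Alpha]
    {i k : ℕ} (hreach : ∀ q, M.Reachable q) (hflower : M.HasFlower i k) :
    WadgeLE (Lidx i k) M.Lang := by
  obtain ⟨q, lam₀, hflower₀⟩ := hflower
  obtain ⟨L, lam, hlen, hflower⟩ := IsFlowerAt.exists_uniform (M := M) hflower₀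
  obtain ⟨p, hp⟩ := hreach q
  obtain a : Alpha := Classical.arbitrary Alpha
  refine ⟨fun w => blockWord a p L fun b => lam (w b).1, continuous_pi fun n => ?_, ?_⟩
  · by_cases hn : n < p.length
    · simp only [blockWord, if_pos hn]
      exact continuous_const
    · simp only [blockWord, if_neg hn]
      exact (continuous_of_discreteTopology
        (f := fun j : IdxAlpha i k => (lam j.1).getD ((n - p.length) % L) a)).comp
          (continuous_apply _)
  · ext w
    obtain ⟨J, hleJ, heqJ⟩ := Nat.exists_eventually_le_frequently_eq (f := fun n => (w n).1)
      (Eventually.of_forall fun n => (w n).2.2)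
    obtain ⟨n₀, hn₀⟩ := heqJ.exists
    have hJ : i ≤ J ∧ J ≤ k := hn₀ ▸ (w n₀).2
    simp only [Lidx, Lang, ParityAccept, Set.mem_preimage, Set.mem_ofPred_eq, Nat.even_iff]
    rw [Nat.sSup_frequently_eq hleJ heqJ,
      sSup_frequently_rank_run_blockWord hp hlen hflower a w hleJ heqJ,
      (hflower.1 J hJ.1 hJ.2).2]

end DPWA

theorem strongly_connected_word_automaton_wadge_general {Alpha Q : Type}
    [Nonempty Alpha] [Fintype Q]
    [TopologicalSpace Alpha] [DiscreteTopology Alpha]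
    (M : DPWA Alpha Q)
    (hconn : ∀ p q : Q, ∃ steps, M.follow p steps = q)
    (i k : ℕ) (hi : i ≤ 1) (hik : i ≤ k)
    (hflower : M.HasFlower i k)
    (hmaximal : ∀ i' k', i' ≤ 1 → i' ≤ k' → k - i < k' - i' → ¬ M.HasFlower i' k') :
    WadgeLE M.Lang (Lidx i k) ∧ WadgeLE (Lidx i k) M.Lang := by
  classical
  have huniv : M.IsCycleSet Finset.univ := DPWA.isCycleSet_univ hconn
  have hk : k % 2 = Finset.univ.sup M.rank % 2 := by
    by_contra hk
    exact hmaximal i (k + 1) hi (by omega) (by omega) (hflower.succ hik huniv hk)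
  have hchain : ∀ c m, M.IsAltChain c m → m ≤ k - i := fun c m hc => by
    by_contra hm
    exact hmaximal _ _ (by omega) (by omega) (by omega) hc.hasFlower
  refine ⟨M.wadgeLE_lang_Lidx (fun s => ?_) fun C hC =>
      DPWA.sup_relabel_mod_two huniv hchain (Nat.sub_le k i) hk hC,
    M.wadgeLE_Lidx_lang (fun q => hconn M.init q) hflower⟩
  have := DPWA.relabel_mem_Icc hchain k s
  omega

/-- a strongly connected deterministic parity word automaton whose
maximal flower has index `(i,k)` and which contains no dual `(i,k)‾`-flower recognises
a language Wadge equivalent to `L_{(i,k)}`. -/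
theorem strongly_connected_word_automaton_wadge {Alpha Q : Type}
    [Fintype Alpha] [Nonempty Alpha] [Fintype Q]
    [TopologicalSpace Alpha] [DiscreteTopology Alpha]
    (M : DPWA Alpha Q)
    (hreach : ∀ q, M.Reachable q)
    (hconn : ∀ p q : Q, ∃ steps, M.follow p steps = q)
    (i k : ℕ) (hi : i ≤ 1) (hik : i ≤ k)
    (hflower : M.HasFlower i k)
    (hmaximal : ∀ i' k', i' ≤ 1 → i' ≤ k' → k - i < k' - i' → ¬ M.HasFlower i' k')
    (hdual : ¬ M.HasFlower (if i = 0 then 1 else 0) (if i = 0 then k + 1 else k - 1)) :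
    WadgeLE M.Lang (Lidx i k) ∧ WadgeLE (Lidx i k) M.Lang :=
  strongly_connected_word_automaton_wadge_general M hconn i k hi hik hflower hmaximal
end
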